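/- arXiv:2304.07155 — 2 statements merged into one kernel-verified Lean document; each statement's English description precedes it below -/
import Mathlib

section
/- Let A and B be unital C*-algebras with states ω_A and ω_B, and let θ : A → B be a unital positive linear map satisfying the Schwarz inequality θ(x)* θ(x) ≤ θ(x* x) and mapping ω_A to ω_B (i.e. ω_B ∘ θ = ω_A). Let (H_A, π_A, Ω_A) and (H_B, π_B, Ω_B) be the GNS constructions of ω_A and ω_B. Then the assignment π_A(x) Ω_A ↦ π_B(θ(x)) Ω_B is well defined on the dense subspace π_A(A) Ω_A and extends uniquely to a contraction L²θ : H_A → H_B. -/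
open scoped ComplexOrder InnerProductSpace

/-!
A vector state `a ↦ ⟪Ω, π a Ω⟫` evaluates `a⋆a` to `‖π a Ω‖²` and is monotone, so the Schwarz
inequality and the invariance of the states give
`‖π_B (θ a) Ω_B‖² = ω_B (θ a⋆ θ a) ≤ ω_B (θ (a⋆a)) = ω_A (a⋆a) = ‖π_A a Ω_A‖²`.
Hence `π_A a Ω_A ↦ π_B (θ a) Ω_B` is a well-defined contraction on the dense subspace
`π_A(A) Ω_A`, which extends uniquely by continuity.
-/

theorem ContinuousLinearMap.existsUnique_norm_le_one_comp_eq
    {𝕜 E F G : Type*} [NontriviallyNormedField 𝕜] [AddCommGroup E] [Module 𝕜 E]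
    [NormedAddCommGroup F] [NormedSpace 𝕜 F] [NormedAddCommGroup G] [NormedSpace 𝕜 G]
    [CompleteSpace G] {e : E →ₗ[𝕜] F} {f : E →ₗ[𝕜] G} (he : DenseRange e)
    (hfe : ∀ x, ‖f x‖ ≤ ‖e x‖) :
    ∃! L : F →L[𝕜] G, ‖L‖ ≤ 1 ∧ ∀ x, L (e x) = f x := by
  have hfe' : ∀ x, ‖f x‖ ≤ 1 * ‖e x‖ := by simpa only [one_mul] using hfe
  refine ⟨f.extendOfNorm e, ⟨LinearMap.opNorm_extendOfNorm_le he zero_le_one hfe',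
    LinearMap.extendOfNorm_eq he ⟨1, hfe'⟩⟩, ?_⟩
  rintro L ⟨-, hL⟩
  exact (LinearMap.extendOfNorm_unique he 1 hfe' L (LinearMap.ext hL)).symm

theorem StarAlgHom.inner_apply_star_mul_self {𝕜 A H : Type*} [RCLike 𝕜] [Semiring A]
    [StarRing A] [Algebra 𝕜 A] [NormedAddCommGroup H] [InnerProductSpace 𝕜 H] [CompleteSpace H]
    (π : A →⋆ₐ[𝕜] (H →L[𝕜] H)) (Ω : H) (a : A) :
    ⟪Ω, π (star a * a) Ω⟫_𝕜 = (‖π a Ω‖ : 𝕜) ^ 2 := by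
  rw [map_mul, map_star, ContinuousLinearMap.star_eq_adjoint, mul_apply_eq_comp,
    ContinuousLinearMap.adjoint_inner_right, inner_self_eq_norm_sq_to_K]

theorem StarAlgHom.inner_apply_mono {A H : Type*} [Semiring A] [PartialOrder A] [StarRing A]
    [StarOrderedRing A] [Algebra ℂ A] [NormedAddCommGroup H] [InnerProductSpace ℂ H]
    [CompleteSpace H] (π : A →⋆ₐ[ℂ] (H →L[ℂ] H)) (Ω : H) {a b : A} (hab : a ≤ b) :
    ⟪Ω, π a Ω⟫_ℂ ≤ ⟪Ω, π b Ω⟫_ℂ := by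
  have hpos : (π b - π a).IsPositive :=
    (ContinuousLinearMap.le_def _ _).mp (OrderHomClass.mono π hab)
  simpa [inner_sub_right, sub_nonneg] using hpos.inner_nonneg_right Ω

theorem norm_apply_map_le_of_schwarz {A B HA HB : Type*} [Semiring A] [StarRing A]
    [Algebra ℂ A] [Semiring B] [PartialOrder B] [StarRing B] [StarOrderedRing B] [Algebra ℂ B]
    [NormedAddCommGroup HA] [InnerProductSpace ℂ HA] [CompleteSpace HA]
    [NormedAddCommGroup HB] [InnerProductSpace ℂ HB] [CompleteSpace HB]
    {θ : A →ₗ[ℂ] B} (hSchwarz : ∀ x : A, star (θ x) * θ x ≤ θ (star x * x))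
    {πA : A →⋆ₐ[ℂ] (HA →L[ℂ] HA)} {ΩA : HA} {πB : B →⋆ₐ[ℂ] (HB →L[ℂ] HB)} {ΩB : HB}
    (hstate : ∀ x : A, ⟪ΩB, πB (θ x) ΩB⟫_ℂ = ⟪ΩA, πA x ΩA⟫_ℂ) (a : A) :
    ‖πB (θ a) ΩB‖ ≤ ‖πA a ΩA‖ := by
  have hsq : ((‖πB (θ a) ΩB‖ ^ 2 : ℝ) : ℂ) ≤ ((‖πA a ΩA‖ ^ 2 : ℝ) : ℂ) :=
    calc ((‖πB (θ a) ΩB‖ ^ 2 : ℝ) : ℂ)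
        = ⟪ΩB, πB (star (θ a) * θ a) ΩB⟫_ℂ := by
          push_cast; exact (πB.inner_apply_star_mul_self ΩB (θ a)).symm
      _ ≤ ⟪ΩB, πB (θ (star a * a)) ΩB⟫_ℂ := πB.inner_apply_mono ΩB (hSchwarz a)
      _ = ⟪ΩA, πA (star a * a) ΩA⟫_ℂ := hstate _
      _ = ((‖πA a ΩA‖ ^ 2 : ℝ) : ℂ) := by
          push_cast; exact πA.inner_apply_star_mul_self ΩA a
  exact (pow_le_pow_iff_left₀ (norm_nonneg _) (norm_nonneg _) two_ne_zero).mp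
    (Complex.real_le_real.mp hsq)

theorem stmt8_general {A B : Type*}
    [NormedRing A] [StarRing A]
    [NormedAlgebra ℂ A]
    [NormedRing B] [StarRing B]
    [NormedAlgebra ℂ B] [PartialOrder B] [StarOrderedRing B]
    {HA HB : Type*} [NormedAddCommGroup HA] [InnerProductSpace ℂ HA] [CompleteSpace HA]
    [NormedAddCommGroup HB] [InnerProductSpace ℂ HB] [CompleteSpace HB]
    (ωA : A →ₗ[ℂ] ℂ) (ωB : B →ₗ[ℂ] ℂ)
    -- θ is a unital positive linear map satisfying the Schwarz inequality
    (θ : A →ₗ[ℂ] B)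
    (hSchwarz : ∀ x : A, star (θ x) * θ x ≤ θ (star x * x))
    -- θ maps ω_A to ω_B
    (hstate : ∀ x : A, ωB (θ x) = ωA x)
    -- GNS data for ω_A and ω_B
    (πA : A →⋆ₐ[ℂ] (HA →L[ℂ] HA)) (ΩA : HA)
    (hcycA : DenseRange fun a : A => πA a ΩA)
    (hωA : ∀ x : A, ωA x = ⟪ΩA, πA x ΩA⟫_ℂ)
    (πB : B →⋆ₐ[ℂ] (HB →L[ℂ] HB)) (ΩB : HB)
    (hωB : ∀ y : B, ωB y = ⟪ΩB, πB y ΩB⟫_ℂ) :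
    ∃! L : HA →L[ℂ] HB, ‖L‖ ≤ 1 ∧ ∀ x : A, L (πA x ΩA) = πB (θ x) ΩB := by
  have hvector : ∀ x : A, ⟪ΩB, πB (θ x) ΩB⟫_ℂ = ⟪ΩA, πA x ΩA⟫_ℂ := fun x => by
    rw [← hωA, ← hωB, hstate]
  exact ContinuousLinearMap.existsUnique_norm_le_one_comp_eq
    (e := (ContinuousLinearMap.apply ℂ HA ΩA).toLinearMap ∘ₗ πA.toLinearMap)
    (f := (ContinuousLinearMap.apply ℂ HB ΩB).toLinearMap ∘ₗ πB.toLinearMap ∘ₗ θ)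
    hcycA (norm_apply_map_le_of_schwarz hSchwarz hvector)

/-- A unital positive map `θ` satisfying the Schwarz inequality and
intertwining the states `ω_A`, `ω_B` induces a unique contraction `L²θ` between the
GNS Hilbert spaces, with `L²θ (π_A(x) Ω_A) = π_B(θ(x)) Ω_B`. -/
theorem stmt8 {A B : Type*}
    [NormedRing A] [StarRing A] [CStarRing A] [CompleteSpace A]
    [NormedAlgebra ℂ A] [StarModule ℂ A] [PartialOrder A] [StarOrderedRing A]
    [NormedRing B] [StarRing B] [CStarRing B] [CompleteSpace B]
    [NormedAlgebra ℂ B] [StarModule ℂ B] [PartialOrder B] [StarOrderedRing B]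
    {HA HB : Type*} [NormedAddCommGroup HA] [InnerProductSpace ℂ HA] [CompleteSpace HA]
    [NormedAddCommGroup HB] [InnerProductSpace ℂ HB] [CompleteSpace HB]
    (ωA : A →ₗ[ℂ] ℂ) (ωB : B →ₗ[ℂ] ℂ)
    -- θ is a unital positive linear map satisfying the Schwarz inequality
    (θ : A →ₗ[ℂ] B) (hθ1 : θ 1 = 1)
    (hθpos : ∀ x : A, 0 ≤ x → 0 ≤ θ x)
    (hSchwarz : ∀ x : A, star (θ x) * θ x ≤ θ (star x * x))
    -- θ maps ω_A to ω_B
    (hstate : ∀ x : A, ωB (θ x) = ωA x)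
    -- GNS data for ω_A and ω_B
    (πA : A →⋆ₐ[ℂ] (HA →L[ℂ] HA)) (ΩA : HA) (hΩA : ‖ΩA‖ = 1)
    (hcycA : DenseRange fun a : A => πA a ΩA)
    (hωA : ∀ x : A, ωA x = ⟪ΩA, πA x ΩA⟫_ℂ)
    (πB : B →⋆ₐ[ℂ] (HB →L[ℂ] HB)) (ΩB : HB) (hΩB : ‖ΩB‖ = 1)
    (hcycB : DenseRange fun b : B => πB b ΩB)
    (hωB : ∀ y : B, ωB y = ⟪ΩB, πB y ΩB⟫_ℂ) :
    ∃! L : HA →L[ℂ] HB, ‖L‖ ≤ 1 ∧ ∀ x : A, L (πA x ΩA) = πB (θ x) ΩB :=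
  stmt8_general ωA ωB θ hSchwarz hstate πA ΩA hcycA hωA πB ΩB hωB
end

section
/- Let C be a C*-category which is additive (has finite direct sums), Karoubi complete (all projections split: for every projection p ∈ End(X) there is an isometry v with v v* = p), and such that End_C(X) is a finite-dimensional C*-algebra for every object X. Then C is semisimple: every object is isomorphic to a finite direct sum of simple objects, where an object S is simple if End_C(S) ≅ ℂ. -/
open CategoryTheory

/-- A C*-category: a dagger category enriched over complex Banach spaces, with
bilinear composition, submultiplicative norms, the C*-identity, and positivity of
`f* ∘ f` (written categorically as `f ≫ dag f : X ⟶ X` for `f : X ⟶ Y`). -/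
class CStarCategory (C : Type*) [Category C]
    [∀ X Y : C, NormedAddCommGroup (X ⟶ Y)] [∀ X Y : C, NormedSpace ℂ (X ⟶ Y)]
    [∀ X Y : C, CompleteSpace (X ⟶ Y)] where
  dag : ∀ {X Y : C}, (X ⟶ Y) → (Y ⟶ X)
  dag_dag : ∀ {X Y : C} (f : X ⟶ Y), dag (dag f) = f
  dag_id : ∀ X : C, dag (𝟙 X) = 𝟙 X
  dag_comp : ∀ {X Y Z : C} (f : X ⟶ Y) (g : Y ⟶ Z), dag (f ≫ g) = dag g ≫ dag f
  dag_add : ∀ {X Y : C} (f g : X ⟶ Y), dag (f + g) = dag f + dag g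
  dag_smul : ∀ {X Y : C} (c : ℂ) (f : X ⟶ Y), dag (c • f) = (starRingEnd ℂ) c • dag f
  add_comp : ∀ {X Y Z : C} (f f' : X ⟶ Y) (g : Y ⟶ Z), (f + f') ≫ g = f ≫ g + f' ≫ g
  comp_add : ∀ {X Y Z : C} (f : X ⟶ Y) (g g' : Y ⟶ Z), f ≫ (g + g') = f ≫ g + f ≫ g'
  smul_comp : ∀ {X Y Z : C} (c : ℂ) (f : X ⟶ Y) (g : Y ⟶ Z), (c • f) ≫ g = c • (f ≫ g)
  comp_smul : ∀ {X Y Z : C} (c : ℂ) (f : X ⟶ Y) (g : Y ⟶ Z), f ≫ (c • g) = c • (f ≫ g)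
  norm_comp_le : ∀ {X Y Z : C} (f : X ⟶ Y) (g : Y ⟶ Z), ‖f ≫ g‖ ≤ ‖f‖ * ‖g‖
  cstar_identity : ∀ {X Y : C} (f : X ⟶ Y), ‖f ≫ dag f‖ = ‖f‖ ^ 2
  pos : ∀ {X Y : C} (f : X ⟶ Y), ∃ g : X ⟶ X, f ≫ dag f = g ≫ dag g


open CStarCategory

/-!
Induct on the dimension of `End(X)`. If every endomorphism of `X` is a scalar, then `X` is zero
or simple. Otherwise `End(X)` is a finite-dimensional C*-algebra other than `ℂ`, so some
self-adjoint element has two distinct eigenvalues, and the continuous functional calculus turns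
it into a projection `p ≠ 0, 1`. Splitting `p` and `1 - p` writes `X` as an orthogonal sum
`Y ⊕ Z`, and conjugation by the isometries embeds `End(Y)` and `End(Z)` as proper subspaces of
`End(X)`, so the induction hypothesis decomposes both summands.
-/

section FiniteDimensionalCStarAlgebra

lemma spectrum_finite_of_finiteDimensional {K A : Type*} [Field K] [Ring A] [Algebra K A]
    [FiniteDimensional K A] (a : A) : (spectrum K a).Finite := by
  refine (Module.End.finite_spectrum (Algebra.lmul K A a)).subset fun k hk => ?_
  rw [spectrum.mem_iff] at hk ⊢
  rwa [← (Algebra.lmul K A).commutes, ← map_sub, Algebra.lmul_isUnit_iff]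

lemma exists_isSelfAdjoint_notMem_range_algebraMap {A : Type*} [Ring A] [StarRing A]
    [Algebra ℂ A] [StarModule ℂ A] {a : A} (ha : a ∉ Set.range (algebraMap ℂ A)) :
    ∃ b : A, IsSelfAdjoint b ∧ b ∉ Set.range (algebraMap ℂ A) := by
  by_contra! h
  obtain ⟨x, hx⟩ := h _ (realPart a).2
  obtain ⟨y, hy⟩ := h _ (imaginaryPart a).2
  refine ha ⟨x + Complex.I * y, ?_⟩
  rw [map_add, map_mul, ← Algebra.smul_def, hx, hy, realPart_add_I_smul_imaginaryPart]

lemma exists_isStarProjection_ne_zero_ne_one {A : Type*} [CStarAlgebra A]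
    [FiniteDimensional ℂ A] {a : A} (ha : a ∉ Set.range (algebraMap ℂ A)) :
    ∃ p : A, IsStarProjection p ∧ p ≠ 0 ∧ p ≠ 1 := by
  have : Nontrivial A := by
    by_contra h
    rw [not_nontrivial_iff_subsingleton] at h
    exact ha ⟨0, Subsingleton.elim _ _⟩
  obtain ⟨b, hb, hb_range⟩ := exists_isSelfAdjoint_notMem_range_algebraMap ha
  have : IsStarNormal b := hb.isStarNormal
  obtain ⟨s, hs⟩ := spectrum.nonempty b
  obtain ⟨t, ht, hts⟩ : ∃ t ∈ spectrum ℂ b, t ≠ s := by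
    by_contra! h
    exact hb_range ⟨s, (CFC.eq_algebraMap_of_spectrum_subset_singleton b s h).symm⟩
  set f : ℂ → ℂ := fun z => if z = s then 1 else 0
  have hspec : spectrum ℂ (cfc f b) = f '' spectrum ℂ b :=
    cfc_map_spectrum f b (hf := (spectrum_finite_of_finiteDimensional b).continuousOn f)
  refine ⟨cfc f b, isStarProjection_iff_spectrum_subset_and_isStarNormal.mpr
    ⟨?_, inferInstance⟩, fun h => ?_, fun h => ?_⟩
  · rw [hspec]
    rintro _ ⟨z, -, rfl⟩
    by_cases hz : z = s <;> simp [f, hz]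
  · have h1 : (1 : ℂ) ∈ spectrum ℂ (cfc f b) := hspec ▸ ⟨s, hs, if_pos rfl⟩
    simp [h, spectrum.zero_eq] at h1
  · have h0 : (0 : ℂ) ∈ spectrum ℂ (cfc f b) := hspec ▸ ⟨t, ht, if_neg hts⟩
    simp [h, spectrum.one_eq] at h0

end FiniteDimensionalCStarAlgebra

namespace CStarCategory

variable {C : Type*} [Category C]
    [∀ X Y : C, NormedAddCommGroup (X ⟶ Y)] [∀ X Y : C, NormedSpace ℂ (X ⟶ Y)]
    [∀ X Y : C, CompleteSpace (X ⟶ Y)] [CStarCategory C]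

section Linear

variable {X Y Z : C}

def leftComp (Z : C) (f : X ⟶ Y) : (Y ⟶ Z) →ₗ[ℂ] (X ⟶ Z) where
  toFun g := f ≫ g
  map_add' := comp_add f
  map_smul' c g := comp_smul c f g

def rightComp (X : C) (g : Y ⟶ Z) : (X ⟶ Y) →ₗ[ℂ] (X ⟶ Z) where
  toFun f := f ≫ g
  map_add' f f' := add_comp f f' g
  map_smul' c f := smul_comp c f g

lemma zero_comp (g : Y ⟶ Z) : (0 : X ⟶ Y) ≫ g = 0 := map_zero (rightComp X g)

lemma comp_zero (f : X ⟶ Y) : f ≫ (0 : Y ⟶ Z) = 0 := map_zero (leftComp Z f)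

lemma comp_sum {ι : Type*} (s : Finset ι) (f : X ⟶ Y) (g : ι → (Y ⟶ Z)) :
    f ≫ ∑ i ∈ s, g i = ∑ i ∈ s, f ≫ g i :=
  map_sum (leftComp Z f) g s

lemma sum_comp {ι : Type*} (s : Finset ι) (f : ι → (X ⟶ Y)) (g : Y ⟶ Z) :
    (∑ i ∈ s, f i) ≫ g = ∑ i ∈ s, f i ≫ g :=
  map_sum (rightComp X g) f s

lemma dag_zero : dag (0 : X ⟶ Y) = 0 := by
  simpa using dag_add (0 : X ⟶ Y) 0

end Linear

-- Multiplication is composition in the applicative order, `f * g = g ≫ f`, as for `End X`.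
def EndAlgebra (X : C) : Type _ := X ⟶ X

namespace EndAlgebra

variable (X : C)

instance : NormedAddCommGroup (EndAlgebra X) := inferInstanceAs (NormedAddCommGroup (X ⟶ X))
instance : NormedSpace ℂ (EndAlgebra X) := inferInstanceAs (NormedSpace ℂ (X ⟶ X))
instance : CompleteSpace (EndAlgebra X) := inferInstanceAs (CompleteSpace (X ⟶ X))

instance : Ring (EndAlgebra X) where
  mul f g := (g ≫ f : X ⟶ X)
  one := (𝟙 X : X ⟶ X)
  mul_assoc f g h := (Category.assoc (X := X) h g f).symm
  one_mul := Category.comp_id (X := X)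
  mul_one := Category.id_comp (Y := X)
  left_distrib f g h := add_comp (X := X) g h f
  right_distrib f g h := comp_add (X := X) h f g
  zero_mul := comp_zero (X := X)
  mul_zero := zero_comp (Z := X)

instance : NormedRing (EndAlgebra X) where
  dist_eq := NormedAddCommGroup.dist_eq
  norm_mul_le f g := (mul_comm ‖f‖ ‖g‖) ▸ norm_comp_le (X := X) g f

instance : StarRing (EndAlgebra X) where
  star f := (dag f : X ⟶ X)
  star_involutive := dag_dag (X := X)
  star_mul f g := dag_comp (X := X) g f
  star_add := dag_add (X := X)

instance : Algebra ℂ (EndAlgebra X) :=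
  Algebra.ofModule (fun c f g => comp_smul (X := X) c g f) (fun c f g => smul_comp (X := X) c g f)

instance : NormedAlgebra ℂ (EndAlgebra X) where
  norm_smul_le := norm_smul_le (α := ℂ) (β := X ⟶ X)

instance : StarModule ℂ (EndAlgebra X) := ⟨dag_smul (X := X)⟩

instance : CStarRing (EndAlgebra X) where
  norm_mul_self_le f := ((sq ‖f‖).symm.trans (cstar_identity (X := X) f).symm).le

instance : CStarAlgebra (EndAlgebra X) where

end EndAlgebra

variable (C) in
def IsKaroubiComplete : Prop :=
  ∀ (X : C) (p : X ⟶ X), dag p = p → p ≫ p = p →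
    ∃ (Y : C) (v : Y ⟶ X), v ≫ dag v = 𝟙 Y ∧ dag v ≫ v = p

section Decomposition

variable {X Y Z : C}

lemma comp_comp_dag {W V : C} (a : W ⟶ Y) (v : Y ⟶ X) (b : V ⟶ Z) (w : Z ⟶ X) :
    (a ≫ v) ≫ dag (b ≫ w) = a ≫ (v ≫ dag w) ≫ dag b := by
  simp only [dag_comp, Category.assoc]

lemma finrank_end_lt_of_isometry [FiniteDimensional ℂ (X ⟶ X)] (v : Y ⟶ X)
    (hv : v ≫ dag v = 𝟙 Y) (hp : dag v ≫ v ≠ 𝟙 X) :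
    Module.finrank ℂ (Y ⟶ Y) < Module.finrank ℂ (X ⟶ X) := by
  set Φ := leftComp X (dag v) ∘ₗ rightComp Y v
  have hΦ : ∀ f, Φ f = dag v ≫ f ≫ v := fun _ => rfl
  have hinj : Function.Injective Φ := fun f g hfg => by
    simpa [hΦ, reassoc_of% hv, hv] using congrArg (fun h => v ≫ h ≫ dag v) hfg
  have hid : 𝟙 X ∉ LinearMap.range Φ := by
    rintro ⟨f, hf⟩
    refine hp ?_
    calc dag v ≫ v = dag v ≫ v ≫ Φ f := by rw [hf, Category.comp_id]
      _ = 𝟙 X := by rw [hΦ, reassoc_of% hv, ← hΦ, hf]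
  rw [← LinearMap.finrank_range_of_inj hinj]
  exact Submodule.finrank_lt fun h => hid (h ▸ Submodule.mem_top)

def IsSimple (X : C) : Prop := ∀ f : X ⟶ X, ∃! c : ℂ, f = c • 𝟙 X

-- In diagrammatic order `v ≫ dag v = 𝟙 Y` says `v* v = 1`; the range projection of `v` is `dag v ≫ v`.
structure IsOrthogonalSum (v : Y ⟶ X) (w : Z ⟶ X) : Prop where
  isometry_left : v ≫ dag v = 𝟙 Y
  isometry_right : w ≫ dag w = 𝟙 Z
  orthogonal : v ≫ dag w = 0
  add_eq_id : dag v ≫ v + dag w ≫ w = 𝟙 X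

structure IsOrthogonalDecomposition {ι : Type*} [Fintype ι] {S : ι → C} (e : ∀ i, S i ⟶ X) :
    Prop where
  isometry : ∀ i, e i ≫ dag (e i) = 𝟙 (S i)
  orthogonal : ∀ i j, i ≠ j → e i ≫ dag (e j) = 0
  sum_eq_id : ∑ i, dag (e i) ≫ e i = 𝟙 X

def IsSemisimple (X : C) : Prop :=
  ∃ (ι : Type) (_ : Fintype ι) (S : ι → C) (e : ∀ i, S i ⟶ X),
    (∀ i, IsSimple (S i)) ∧ IsOrthogonalDecomposition e

lemma isSemisimple_of_forall_eq_smul_id (h : ∀ f : X ⟶ X, ∃ c : ℂ, f = c • 𝟙 X) :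
    IsSemisimple X := by
  by_cases h0 : 𝟙 X = 0
  · exact ⟨Empty, inferInstance, Empty.elim, fun i => i.elim, fun i => i.elim,
      ⟨fun i => i.elim, fun i => i.elim, by simp [h0]⟩⟩
  refine ⟨Unit, inferInstance, fun _ => X, fun _ => 𝟙 X, fun _ f => ?_,
    ⟨fun _ => by simp [dag_id], fun i j hij => (hij rfl).elim, by simp [dag_id]⟩⟩
  obtain ⟨c, rfl⟩ := h f
  exact ⟨c, rfl, fun c' hc' => (smul_left_injective ℂ h0 hc').symm⟩

lemma exists_isOrthogonalSum_of_isStarProjection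
    (hkaroubi : IsKaroubiComplete C)
    {p : EndAlgebra X} (hp : IsStarProjection p) :
    ∃ (Y Z : C) (v : Y ⟶ X) (w : Z ⟶ X),
      IsOrthogonalSum v w ∧ dag v ≫ v = p ∧ dag w ≫ w = (1 - p : EndAlgebra X) := by
  obtain ⟨Y, v, hv, hvp⟩ := hkaroubi X p hp.isSelfAdjoint hp.isIdempotentElem
  obtain ⟨Z, w, hw, hwq⟩ := hkaroubi X (1 - p : EndAlgebra X) hp.one_sub.isSelfAdjoint
    hp.one_sub.isIdempotentElem
  have hpq : (p : X ⟶ X) ≫ (1 - p : EndAlgebra X) = (0 : X ⟶ X) := hp.one_sub_mul_self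
  refine ⟨Y, Z, v, w, ⟨hv, hw, ?_, ?_⟩, hvp, hwq⟩
  · calc v ≫ dag w = v ≫ ((dag v ≫ v) ≫ (dag w ≫ w)) ≫ dag w := by
          simp only [Category.assoc, reassoc_of% hv, hw, Category.comp_id]
      _ = 0 := by rw [hvp, hwq, hpq, zero_comp, comp_zero]
  · rw [hvp, hwq]
    exact add_sub_cancel p 1

lemma sum_dag_comp_comp {ι : Type*} (s : Finset ι) {S : ι → C} (e : ∀ i, S i ⟶ Y) (v : Y ⟶ X) :
    ∑ i ∈ s, dag (e i ≫ v) ≫ e i ≫ v = dag v ≫ (∑ i ∈ s, dag (e i) ≫ e i) ≫ v := by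
  simp only [dag_comp, Category.assoc, comp_sum, sum_comp]

lemma IsOrthogonalSum.isSemisimple {v : Y ⟶ X} {w : Z ⟶ X} (h : IsOrthogonalSum v w)
    (hY : IsSemisimple Y) (hZ : IsSemisimple Z) : IsSemisimple X := by
  obtain ⟨ι, _, S, e, hS, he⟩ := hY
  obtain ⟨κ, _, T, f, hT, hf⟩ := hZ
  have hwv : w ≫ dag v = 0 := by
    simpa only [dag_comp, dag_dag, dag_zero] using congrArg dag h.orthogonal
  refine ⟨ι ⊕ κ, inferInstance, Sum.elim S T, fun | .inl i => e i ≫ v | .inr k => f k ≫ w,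
    fun | .inl i => hS i | .inr k => hT k, ⟨?_, ?_, ?_⟩⟩
  · rintro (i | k) <;> dsimp only [Sum.elim_inl, Sum.elim_inr]
    · rw [comp_comp_dag, h.isometry_left, Category.id_comp, he.isometry]
    · rw [comp_comp_dag, h.isometry_right, Category.id_comp, hf.isometry]
  · rintro (i | k) (j | l) hne <;> dsimp only [Sum.elim_inl, Sum.elim_inr]
    · rw [comp_comp_dag, h.isometry_left, Category.id_comp]
      exact he.orthogonal i j (hne ∘ congrArg Sum.inl)
    · rw [comp_comp_dag, h.orthogonal, zero_comp]
      exact comp_zero _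
    · rw [comp_comp_dag, hwv, zero_comp]
      exact comp_zero _
    · rw [comp_comp_dag, h.isometry_right, Category.id_comp]
      exact hf.orthogonal k l (hne ∘ congrArg Sum.inr)
  · rw [Fintype.sum_sum_type]
    dsimp only [Sum.elim_inl, Sum.elim_inr]
    rw [sum_dag_comp_comp, sum_dag_comp_comp, he.sum_eq_id, hf.sum_eq_id, Category.id_comp,
      Category.id_comp, h.add_eq_id]

theorem isSemisimple_of_finiteDimensional
    (hkaroubi : IsKaroubiComplete C)
    (hfin : ∀ X : C, FiniteDimensional ℂ (X ⟶ X)) (X : C) : IsSemisimple X := by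
  induction h : Module.finrank ℂ (X ⟶ X) using Nat.strong_induction_on generalizing X with
  | _ N ih =>
  by_cases hX : ∀ f : X ⟶ X, ∃ c : ℂ, f = c • 𝟙 X
  · exact isSemisimple_of_forall_eq_smul_id hX
  push Not at hX
  obtain ⟨a, ha⟩ := hX
  have : FiniteDimensional ℂ (EndAlgebra X) := hfin X
  obtain ⟨p, hp, hp0, hp1⟩ := exists_isStarProjection_ne_zero_ne_one (A := EndAlgebra X) (a := a)
    (by rintro ⟨c, rfl⟩; exact ha c (Algebra.algebraMap_eq_smul_one (A := EndAlgebra X) c))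
  obtain ⟨Y, Z, v, w, hvw, hv, hw⟩ := exists_isOrthogonalSum_of_isStarProjection hkaroubi hp
  refine hvw.isSemisimple (ih _ ?_ Y rfl) (ih _ ?_ Z rfl) <;> rw [← h]
  · exact finrank_end_lt_of_isometry v hvw.isometry_left (hv.trans_ne hp1)
  · exact finrank_end_lt_of_isometry w hvw.isometry_right (hw.trans_ne (mt sub_eq_self.mp hp0))

end Decomposition

end CStarCategory

/-- An additive (finite direct sums), Karoubi complete (projections
split via isometries) C*-category all of whose endomorphism algebras are
finite-dimensional is semisimple: every object is a finite direct sum (witnessed by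
a family of isometries with orthogonal ranges summing to the identity) of simple
objects, i.e. objects whose endomorphism C*-algebra is `ℂ`. -/
theorem stmt14 {C : Type*} [Category C]
    [∀ X Y : C, NormedAddCommGroup (X ⟶ Y)] [∀ X Y : C, NormedSpace ℂ (X ⟶ Y)]
    [∀ X Y : C, CompleteSpace (X ⟶ Y)] [CStarCategory C]
    -- C has finite direct sums
    (hsums : ∀ X Y : C, ∃ (Z : C) (i₁ : X ⟶ Z) (i₂ : Y ⟶ Z),
      i₁ ≫ dag i₁ = 𝟙 X ∧ i₂ ≫ dag i₂ = 𝟙 Y ∧ i₁ ≫ dag i₂ = 0 ∧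
      dag i₁ ≫ i₁ + dag i₂ ≫ i₂ = 𝟙 Z)
    -- C is Karoubi complete: every projection splits via an isometry
    (hkaroubi : ∀ (X : C) (p : X ⟶ X), dag p = p → p ≫ p = p →
      ∃ (Y : C) (v : Y ⟶ X), v ≫ dag v = 𝟙 Y ∧ dag v ≫ v = p)
    -- all endomorphism C*-algebras are finite dimensional
    (hfin : ∀ X : C, FiniteDimensional ℂ (X ⟶ X)) :
    -- C is semisimple
    ∀ X : C, ∃ (n : ℕ) (S : Fin n → C) (ι : ∀ i, S i ⟶ X),
      (∀ i, ∀ f : S i ⟶ S i, ∃! c : ℂ, f = c • 𝟙 (S i)) ∧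
      (∀ i, ι i ≫ dag (ι i) = 𝟙 (S i)) ∧
      (∀ i j, i ≠ j → ι i ≫ dag (ι j) = 0) ∧
      (∑ i, dag (ι i) ≫ ι i) = 𝟙 X := by
  intro X
  obtain ⟨κ, _, S, e, hS, he⟩ := isSemisimple_of_finiteDimensional hkaroubi hfin X
  let σ := (Fintype.equivFin κ).symm
  refine ⟨Fintype.card κ, S ∘ σ, fun i => e (σ i), fun i => hS (σ i), fun i => he.isometry (σ i),
    fun i j hij => he.orthogonal (σ i) (σ j) (σ.injective.ne hij), ?_⟩
  rw [← he.sum_eq_id]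
  exact σ.sum_comp fun k => dag (e k) ≫ e k
end
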